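/- arXiv:0906.4711 — 3 statements merged into one kernel-verified Lean document; each statement's English description precedes it below -/
import Mathlib

section
/- (Lamport) For every qualitative LTL formula φ (a formula containing no occurrence of the next operator X) and any two stutter-equivalent ω-words w and w', it holds that w ⊨ φ if and only if w' ⊨ φ; consequently the set of models ⟦φ⟧ of every qualitative LTL formula is closed under stuttering. -/
inductive LTL (α : Type) : Type
  | atom : α → LTL α
  | not : LTL α → LTL α
  | and : LTL α → LTL α → LTL α
  | until_ : LTL α → LTL α → LTL α
  | next : LTL α → LTL α

abbrev Word (α : Type) := ℕ → Set α

def LTL.Sat {α : Type} (w : Word α) : LTL α → ℕ → Prop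
  | .atom p, i => p ∈ w i
  | .not φ, i => ¬ φ.Sat w i
  | .and φ ψ, i => φ.Sat w i ∧ ψ.Sat w i
  | .until_ φ ψ, i => ∃ j, i ≤ j ∧ ψ.Sat w j ∧ ∀ k, i ≤ k → k < j → φ.Sat w k
  | .next φ, i => φ.Sat w (i+1)

def LTL.Satisfiable {α : Type} (φ : LTL α) : Prop := ∃ w : Word α, φ.Sat w 0

def LTL.Qualitative {α : Type} : LTL α → Prop
  | .atom _ => True
  | .not φ => φ.Qualitative
  | .and φ ψ => φ.Qualitative ∧ ψ.Qualitative
  | .until_ φ ψ => φ.Qualitative ∧ ψ.Qualitative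
  | .next _ => False

def LTL.Propositional {α : Type} : LTL α → Prop
  | .atom _ => True
  | .not φ => φ.Propositional
  | .and φ ψ => φ.Propositional ∧ ψ.Propositional
  | .until_ _ _ => False
  | .next _ => False

def LTL.size {α : Type} : LTL α → ℕ
  | .atom _ => 1
  | .not φ => φ.size + 1
  | .and φ ψ => φ.size + ψ.size + 1
  | .until_ φ ψ => φ.size + ψ.size + 1
  | .next φ => φ.size + 1

def StutterStep {α : Type} (w : Word α) (i : ℕ) : Prop :=
  w (i+1) = w i ∧ ∃ j, i < j ∧ w j ≠ w i

def NonStutterStep {α : Type} (w : Word α) (i : ℕ) : Prop :=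
  w (i+1) ≠ w i ∨ ∀ j, w (i+j) = w i

def StutterRemoval {α : Type} (w w' : Word α) : Prop :=
  ∃ f : ℕ → ℕ, StrictMono f ∧ (∀ k, w' k = w (f k)) ∧
    ∀ i, i ∉ Set.range f → StutterStep w i

def StutterEquiv {α : Type} (w w' : Word α) : Prop :=
  StutterRemoval w w' ∨ StutterRemoval w' w

def ClosedUnderStuttering {α : Type} (W : Set (Word α)) : Prop :=
  ∀ w ∈ W, ∀ w', StutterEquiv w w' → w' ∈ W

/-!
If `w'` is obtained from `w` by deleting stuttering steps, the kept positions are enumerated by a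
strictly monotone `f`, and every position `m` of `w` carries the same letter as position `g m` of
`w'`, where `g` is the lower adjoint of `f` (the index of the first kept position at or after `m`).
An induction on the formula shows that `w, m ⊨ φ ↔ w', g m ⊨ φ` for every `X`-free `φ`: an until
witness `j` in `w` maps to `g j`, and a witness `j'` in `w'` lifts to the first position of the
block `g⁻¹ {j'}` (or to `m` itself if `m` already lies in that block).
-/

theorem apply_eq_of_forall_apply_succ_eq {β : Type*} {w : ℕ → β} {m n : ℕ} (hmn : m ≤ n)
    (h : ∀ l, m ≤ l → l < n → w (l + 1) = w l) : w n = w m := by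
  induction n, hmn using Nat.le_induction with
  | base => rfl
  | succ n hmn ih =>
    rw [h n hmn n.lt_succ_self, ih fun l hml hl => h l hml (hl.trans n.lt_succ_self)]

namespace StrictMono

variable {f : ℕ → ℕ} (hf : StrictMono f)

noncomputable def lowerAdjoint (m : ℕ) : ℕ :=
  Nat.find (⟨m, hf.le_apply⟩ : ∃ k, m ≤ f k)

theorem gc_lowerAdjoint : GaloisConnection hf.lowerAdjoint f := fun m k => by
  rw [lowerAdjoint, Nat.find_le_iff]
  exact ⟨fun ⟨_, hk, hm⟩ => hm.trans (hf.monotone hk), fun hm => ⟨k, le_rfl, hm⟩⟩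

theorem lowerAdjoint_apply (k : ℕ) : hf.lowerAdjoint (f k) = k :=
  le_antisymm (hf.gc_lowerAdjoint.l_u_le k) (hf.le_iff_le.1 (hf.gc_lowerAdjoint.le_u_l (f k)))

theorem lowerAdjoint_zero : hf.lowerAdjoint 0 = 0 :=
  Nat.le_zero.1 ((hf.gc_lowerAdjoint 0 0).2 (Nat.zero_le _))

theorem exists_lowerAdjoint_eq_forall_lt (n : ℕ) :
    ∃ j, hf.lowerAdjoint j = n ∧ ∀ k < j, hf.lowerAdjoint k < n := by
  cases n with
  | zero => exact ⟨0, hf.lowerAdjoint_zero, fun k hk => absurd hk (Nat.not_lt_zero k)⟩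
  | succ t =>
    refine ⟨f t + 1, le_antisymm ?_ ?_, fun k hk => ?_⟩
    · exact (hf.gc_lowerAdjoint _ _).2 (hf (Nat.lt_succ_self t))
    · exact hf.gc_lowerAdjoint.lt_iff_lt.2 (Nat.lt_succ_self _)
    · exact Nat.lt_succ_of_le ((hf.gc_lowerAdjoint _ _).2 (Nat.le_of_lt_succ hk))

theorem apply_eq_apply_lowerAdjoint {β : Type*} {w : ℕ → β}
    (hw : ∀ i ∉ Set.range f, w (i + 1) = w i) (m : ℕ) : w (f (hf.lowerAdjoint m)) = w m := by
  refine apply_eq_of_forall_apply_succ_eq (hf.gc_lowerAdjoint.le_u_l m) fun l hml hl => hw l ?_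
  rintro ⟨k, rfl⟩
  exact (hf.gc_lowerAdjoint.lt_iff_lt.1 (hf.lt_iff_lt.1 hl)).not_ge hml

end StrictMono

theorem LTL.Qualitative.sat_iff_sat_lowerAdjoint {α : Type} {φ : LTL α} (hφ : φ.Qualitative)
    {w w' : Word α} {f : ℕ → ℕ} (hf : StrictMono f) (hw : ∀ m, w m = w' (hf.lowerAdjoint m))
    (m : ℕ) : φ.Sat w m ↔ φ.Sat w' (hf.lowerAdjoint m) := by
  have gc := hf.gc_lowerAdjoint
  induction φ generalizing m with
  | atom p => simp only [LTL.Sat, hw]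
  | not φ ih => simp only [LTL.Sat, ih hφ m]
  | and φ ψ ihφ ihψ => simp only [LTL.Sat, ihφ hφ.1 m, ihψ hφ.2 m]
  | next φ => exact hφ.elim
  | until_ φ ψ ihφ ihψ =>
    constructor
    · rintro ⟨j, hmj, hψ, hφ'⟩
      refine ⟨hf.lowerAdjoint j, gc.monotone_l hmj, (ihψ hφ.2 j).1 hψ, fun k hk hkj => ?_⟩
      rw [← hf.lowerAdjoint_apply k]
      exact (ihφ hφ.1 (f k)).1 (hφ' (f k) ((gc m k).1 hk) (gc.lt_iff_lt.1 hkj))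
    · rintro ⟨j', hmj', hψ, hφ'⟩
      obtain ⟨j, hj, hlt⟩ := hf.exists_lowerAdjoint_eq_forall_lt j'
      have hgmax : hf.lowerAdjoint (max m j) = j' := by
        rw [gc.monotone_l.map_max, hj, max_eq_right hmj']
      refine ⟨max m j, le_max_left m j, (ihψ hφ.2 _).2 (hgmax ▸ hψ), fun k hk hkj => ?_⟩
      have hkj : k < j := (lt_max_iff.1 hkj).resolve_left hk.not_gt
      exact (ihφ hφ.1 k).2 (hφ' (hf.lowerAdjoint k) (gc.monotone_l hk) (hlt k hkj))

theorem StutterRemoval.sat_iff {α : Type} {w w' : Word α} (h : StutterRemoval w w')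
    {φ : LTL α} (hφ : φ.Qualitative) : φ.Sat w 0 ↔ φ.Sat w' 0 := by
  obtain ⟨f, hf, hw', hs⟩ := h
  have hw : ∀ m, w m = w' (hf.lowerAdjoint m) := fun m => by
    rw [hw', hf.apply_eq_apply_lowerAdjoint fun i hi => (hs i hi).1]
  simpa only [hf.lowerAdjoint_zero] using hφ.sat_iff_sat_lowerAdjoint hf hw 0

theorem StutterEquiv.sat_iff {α : Type} {w w' : Word α} (h : StutterEquiv w w')
    {φ : LTL α} (hφ : φ.Qualitative) : φ.Sat w 0 ↔ φ.Sat w' 0 :=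
  h.elim (·.sat_iff hφ) fun h => (h.sat_iff hφ).symm

/-- (Lamport) Qualitative LTL formulas are insensitive to stuttering: stutter-equivalent
words satisfy the same qualitative formulas; consequently the set of models of every
qualitative LTL formula is closed under stuttering. -/
theorem stmt0 {α : Type} :
    (∀ φ : LTL α, φ.Qualitative → ∀ w w' : Word α, StutterEquiv w w' →
      (φ.Sat w 0 ↔ φ.Sat w' 0)) ∧
    (∀ φ : LTL α, φ.Qualitative → ClosedUnderStuttering {w : Word α | φ.Sat w 0}) :=
  ⟨fun _ hφ _ _ h => h.sat_iff hφ, fun _ hφ _ hw _ h => (h.sat_iff hφ).1 hw⟩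
end

section
/- (Peled–Wilke) If a set W of ω-words over 𝒫 is closed under stuttering and is LTL-expressible, i.e., W = ⟦φ⟧ for some LTL formula φ, then there exists a qualitative LTL formula ψ (containing no occurrence of X) with ⟦ψ⟧ = W. -/
/-!
Let `L` be the atoms of `φ`. On a word over `L` in which every letter is either followed by a
different one or repeated forever, `X θ` holds at `i` iff, for the formula `χ` describing the
letter at `i`, either `θ` holds at the first position where `χ` fails, or `χ` holds forever and
`θ` holds at `i`. Replacing every `X` in this way yields an X-free `ψ` that agrees with `φ` on such
words. X-free formulas are invariant under stutter removal, and stutter removal turns the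
restriction of any word to `L` into a word of that kind; since `⟦φ⟧` is closed under stuttering,
`⟦ψ⟧ = ⟦φ⟧`.
-/

namespace LTL

variable {α : Type}

def atoms : LTL α → List α
  | .atom p => [p]
  | .not φ => φ.atoms
  | .and φ ψ => φ.atoms ++ ψ.atoms
  | .until_ φ ψ => φ.atoms ++ ψ.atoms
  | .next φ => φ.atoms

theorem exists_mem_atoms (φ : LTL α) : ∃ p, p ∈ φ.atoms := by
  induction φ with
  | atom p => exact ⟨p, List.mem_singleton_self p⟩
  | not _ ih | next _ ih => exact ih
  | and _ _ ih _ | until_ _ _ ih _ =>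
    obtain ⟨p, hp⟩ := ih
    exact ⟨p, List.mem_append_left _ hp⟩

theorem sat_congr_of_atoms {u v : Word α} {φ : LTL α}
    (h : ∀ p ∈ φ.atoms, ∀ j, p ∈ u j ↔ p ∈ v j) (i : ℕ) : φ.Sat u i ↔ φ.Sat v i := by
  induction φ generalizing i with
  | atom p => exact h p (List.mem_singleton_self p) i
  | not φ ih => simp only [Sat, ih h]
  | next φ ih => exact ih h (i + 1)
  | and φ ψ ih₁ ih₂ | until_ φ ψ ih₁ ih₂ =>
    simp only [atoms, List.mem_append] at h
    simp only [Sat, ih₁ fun p hp => h p (.inl hp), ih₂ fun p hp => h p (.inr hp)]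

theorem sat_inter_atoms_iff {w : Word α} {L : List α} {φ : LTL α}
    (h : φ.atoms ⊆ L) (i : ℕ) : φ.Sat (fun j => w j ∩ {p | p ∈ L}) i ↔ φ.Sat w i :=
  sat_congr_of_atoms (fun p hp j => by simp [h hp]) i

theorem sat_shift (v : Word α) (k : ℕ) (φ : LTL α) (i : ℕ) :
    φ.Sat (fun t => v (t + k)) i ↔ φ.Sat v (i + k) := by
  induction φ generalizing i with
  | atom p => rfl
  | not φ ih => simp only [Sat, ih]
  | and φ ψ ih₁ ih₂ => simp only [Sat, ih₁, ih₂]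
  | next φ ih => simp only [Sat, ih, Nat.add_right_comm]
  | until_ φ ψ ih₁ ih₂ =>
    simp only [Sat, ih₁, ih₂]
    constructor
    · rintro ⟨j, hij, hψ, hφ⟩
      refine ⟨j + k, by omega, hψ, fun m hm₁ hm₂ => ?_⟩
      simpa [Nat.sub_add_cancel (by omega : k ≤ m)] using hφ (m - k) (by omega) (by omega)
    · rintro ⟨j, hij, hψ, hφ⟩
      refine ⟨j - k, by omega, by rwa [Nat.sub_add_cancel (by omega)], fun m hm₁ hm₂ => ?_⟩
      exact hφ (m + k) (by omega) (by omega)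

theorem sat_succ_iff_of_const {v : Word α} {i : ℕ} (hc : ∀ j, v (i + j) = v i) (φ : LTL α) :
    φ.Sat v (i + 1) ↔ φ.Sat v i := by
  have hshift : (fun t => v (t + (i + 1))) = fun t => v (t + i) := by
    funext t
    rw [show t + (i + 1) = i + (t + 1) by omega, hc, Nat.add_comm, hc]
  calc φ.Sat v (i + 1) ↔ φ.Sat (fun t => v (t + (i + 1))) 0 := by rw [sat_shift, Nat.zero_add]
    _ ↔ φ.Sat (fun t => v (t + i)) 0 := by rw [hshift]
    _ ↔ φ.Sat v i := by rw [sat_shift, Nat.zero_add]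

theorem sat_comp_iff {w : Word α} {g : ℕ → ℕ} (hg : Monotone g) (hgs : Function.Surjective g)
    {φ : LTL α} (hφ : φ.Qualitative) (m : ℕ) : φ.Sat (w ∘ g) m ↔ φ.Sat w (g m) := by
  induction φ generalizing m with
  | atom p => rfl
  | not φ ih => simp only [Sat, ih hφ]
  | and φ ψ ih₁ ih₂ => simp only [Sat, ih₁ hφ.1, ih₂ hφ.2]
  | next φ ih => exact hφ.elim
  | until_ φ ψ ih₁ ih₂ =>
    simp only [Sat, ih₁ hφ.1, ih₂ hφ.2]
    have hpre : ∀ l, g m ≤ l → ∃ k, m ≤ k ∧ g k = l := fun l hl => by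
      obtain ⟨k, rfl⟩ := hgs l
      exact ⟨max m k, le_max_left m k, by rw [hg.map_max, max_eq_right hl]⟩
    constructor
    · rintro ⟨j, hmj, hψ, hφ⟩
      refine ⟨g j, hg hmj, hψ, fun l hml hlj => ?_⟩
      obtain ⟨k, hmk, rfl⟩ := hpre l hml
      exact hφ k hmk (hg.reflect_lt hlj)
    · rintro ⟨j', hmj', hψ, hφ⟩
      classical
      have hex := hpre j' hmj'
      obtain ⟨hmj, hgj⟩ := Nat.find_spec hex
      refine ⟨Nat.find hex, hmj, hgj.symm ▸ hψ, fun k hmk hkj => hφ (g k) (hg hmk) ?_⟩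
      exact lt_of_le_of_ne (hgj ▸ hg hkj.le) fun hk => Nat.find_min hex hkj ⟨hmk, hk⟩

end LTL

theorem eq_of_succ_eq_of_le {β : Type} {w : ℕ → β} {a b : ℕ} (hab : a ≤ b)
    (h : ∀ t, a ≤ t → t < b → w (t + 1) = w t) : w b = w a := by
  induction b, hab using Nat.le_induction with
  | base => rfl
  | succ n han ih => rw [h n han n.lt_succ_self, ih fun t hat htn => h t hat (by omega)]

section Stuttering

variable {α : Type}

theorem StutterRemoval.exists_monotone_surjective {w w' : Word α} (h : StutterRemoval w w') :
    ∃ g : ℕ → ℕ, Monotone g ∧ Function.Surjective g ∧ w = w' ∘ g := by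
  classical
  obtain ⟨f, hf, hw', hstep⟩ := h
  have hex : ∀ m, ∃ k, m ≤ f k := fun m => ⟨m, hf.le_apply⟩
  let g m := Nat.find (hex m)
  have hgf : ∀ k, g (f k) = k := fun k =>
    le_antisymm (Nat.find_min' _ le_rfl)
      (not_lt.1 fun hlt => (hf hlt).not_ge (Nat.find_spec (hex (f k))))
  refine ⟨g, fun m m' hmm' => Nat.find_mono fun k hk => hmm'.trans hk,
    fun k => ⟨f k, hgf k⟩, funext fun m => ?_⟩
  -- no position in `[m, f (g m))` lies in the range of `f`, so all of them are stuttering steps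
  refine (eq_of_succ_eq_of_le (Nat.find_spec (hex m)) fun t hmt htg => (hstep t ?_).1).symm.trans
    (hw' (g m)).symm
  rintro ⟨l, rfl⟩
  exact htg.not_ge (hf.monotone (Nat.find_min' _ hmt))

theorem LTL.sat_zero_iff_of_stutterRemoval {w w' : Word α} (h : StutterRemoval w w')
    {φ : LTL α} (hφ : φ.Qualitative) : φ.Sat w 0 ↔ φ.Sat w' 0 := by
  obtain ⟨g, hg, hgs, rfl⟩ := h.exists_monotone_surjective
  obtain ⟨n, hn⟩ := hgs 0
  have hg0 : g 0 = 0 := by simpa [hn] using hg (Nat.zero_le n)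
  rw [LTL.sat_comp_iff hg hgs hφ, hg0]

theorem infinite_setOf_not_stutterStep (v : Word α) : {i | ¬ StutterStep v i}.Infinite := by
  refine Set.infinite_of_not_bddAbove fun ⟨b, hb⟩ => ?_
  have hstep : ∀ i, b < i → StutterStep v i := fun i hbi => not_not.1 fun h => (hb h).not_gt hbi
  obtain ⟨-, j, hj, hne⟩ := hstep (b + 1) (lt_add_one b)
  exact hne (eq_of_succ_eq_of_le hj.le fun t ht _ => (hstep t ht).1)

theorem exists_stutterRemoval_forall_nonStutterStep (v : Word α) :
    ∃ v', StutterRemoval v v' ∧ ∀ i, NonStutterStep v' i := by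
  have hK := infinite_setOf_not_stutterStep v
  set f := Nat.nth fun i => ¬ StutterStep v i
  have hf : StrictMono f := Nat.nth_strictMono hK
  have hrange : ∀ t, t ∉ Set.range f → StutterStep v t := fun t ht =>
    not_not.1 fun h => ht (Nat.range_nth_of_infinite hK ▸ h)
  refine ⟨v ∘ f, ⟨f, hf, fun k => rfl, hrange⟩, fun i => or_iff_not_imp_left.2 fun hsucc => ?_⟩
  have hstep : v (f i + 1) = v (f i) := by
    refine (eq_of_succ_eq_of_le (hf (lt_add_one i)) fun t hit hti => (hrange t ?_).1).symm.trans
      (not_not.1 hsucc)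
    rintro ⟨l, rfl⟩
    exact (hf.lt_iff_lt.1 hit).not_ge (Nat.lt_succ_iff.1 (hf.lt_iff_lt.1 hti))
  have hconst : ∀ j, f i < j → v j = v (f i) := fun j hij =>
    not_not.1 fun hne => Nat.nth_mem_of_infinite hK i ⟨hstep, j, hij, hne⟩
  intro j
  rcases j.eq_zero_or_pos with rfl | hj
  · rfl
  · exact hconst _ (hf (by omega))

end Stuttering

namespace LTL

variable {α : Type}

-- The syntax has no constants, so `⊤` is built from an atom.
def top (p : α) : LTL α := .not (.and (.atom p) (.not (.atom p)))

def or (φ ψ : LTL α) : LTL α := .not (.and (.not φ) (.not ψ))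

def always (p : α) (φ : LTL α) : LTL α := .not (.until_ (top p) (.not φ))

def disj (p : α) : List (LTL α) → LTL α
  | [] => .not (top p)
  | φ :: l => or φ (disj p l)

def atLetterChange (p₀ : α) (χ τ : LTL α) : LTL α :=
  .and χ (or (.until_ χ (.and (.not χ) τ)) (.and (always p₀ χ) τ))

theorem qualitative_disj (p : α) {l : List (LTL α)} (h : ∀ φ ∈ l, φ.Qualitative) :
    (disj p l).Qualitative := by
  induction l with
  | nil => simp [disj, top, Qualitative]
  | cons φ l ih => simp_all [disj, or, Qualitative]

theorem atoms_disj_subset {p : α} {L : List α} (hp : p ∈ L) {l : List (LTL α)}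
    (h : ∀ φ ∈ l, φ.atoms ⊆ L) : (disj p l).atoms ⊆ L := by
  induction l with
  | nil => simp [disj, top, atoms, hp]
  | cons φ l ih => simp_all [disj, or, atoms]

section Letters

variable [DecidableEq α]

def literal (S : List α) (p : α) : LTL α := if p ∈ S then .atom p else .not (.atom p)

def letterOn (p₀ : α) (S : List α) : List α → LTL α
  | [] => top p₀
  | p :: L => .and (literal S p) (letterOn p₀ S L)

def nextFree (p₀ : α) (L : List α) (τ : LTL α) : LTL α :=
  disj p₀ (L.sublists.map fun S => atLetterChange p₀ (letterOn p₀ S L) τ)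

def elimNext (p₀ : α) (L : List α) : LTL α → LTL α
  | .atom p => .atom p
  | .not φ => .not (elimNext p₀ L φ)
  | .and φ ψ => .and (elimNext p₀ L φ) (elimNext p₀ L ψ)
  | .until_ φ ψ => .until_ (elimNext p₀ L φ) (elimNext p₀ L ψ)
  | .next φ => nextFree p₀ L (elimNext p₀ L φ)

end Letters

section Semantics

variable (v : Word α) (i : ℕ)

@[simp] theorem sat_top (p : α) : (top p).Sat v i := by
  simp [top, Sat]

@[simp] theorem sat_or (φ ψ : LTL α) : (or φ ψ).Sat v i ↔ φ.Sat v i ∨ ψ.Sat v i := by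
  simp only [or, Sat]
  tauto

@[simp] theorem sat_always (p : α) (φ : LTL α) : (always p φ).Sat v i ↔ ∀ j, i ≤ j → φ.Sat v j := by
  simp [always, Sat]

@[simp] theorem sat_disj (p : α) (l : List (LTL α)) : (disj p l).Sat v i ↔ ∃ φ ∈ l, φ.Sat v i := by
  induction l with
  | nil => simp [disj, Sat]
  | cons φ l ih => simp [disj, ih]

end Semantics

theorem sat_atLetterChange {v : Word α} {i : ℕ} {χ : LTL α} (p₀ : α) (τ : LTL α)
    (hχ : ∀ j, χ.Sat v j ↔ v j = v i) (hns : NonStutterStep v i) :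
    (atLetterChange p₀ χ τ).Sat v i ↔ τ.Sat v (i + 1) := by
  simp only [atLetterChange, Sat, sat_or, sat_always, hχ, true_and]
  rcases hns with hne | hconst
  · constructor
    · rintro (⟨j, hij, ⟨hj, hτ⟩, hbefore⟩ | ⟨hall, -⟩)
      · obtain rfl : j = i + 1 := by
          have hji : j ≠ i := by rintro rfl; exact hj rfl
          by_contra hj'
          exact hne (hbefore (i + 1) (by omega) (by omega))
        exact hτ
      · exact (hne (hall (i + 1) (by omega))).elim
    · intro hτ
      exact .inl ⟨i + 1, by omega, ⟨hne, hτ⟩, fun k hik hki => by rw [show k = i by omega]⟩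
  · have hall : ∀ j, i ≤ j → v j = v i := fun j hij => by
      simpa [Nat.add_sub_cancel' hij] using hconst (j - i)
    rw [sat_succ_iff_of_const hconst]
    constructor
    · rintro (⟨j, hij, ⟨hj, -⟩, -⟩ | ⟨-, hτ⟩)
      · exact (hj (hall j hij)).elim
      · exact hτ
    · exact fun hτ => .inr ⟨hall, hτ⟩

section Letters

variable [DecidableEq α]

@[simp] theorem sat_letterOn (v : Word α) (i : ℕ) (p₀ : α) (S L : List α) :
    (letterOn p₀ S L).Sat v i ↔ ∀ p ∈ L, (p ∈ v i ↔ p ∈ S) := by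
  induction L with
  | nil => simp [letterOn]
  | cons p L ih =>
    by_cases hp : p ∈ S <;> simp [letterOn, literal, Sat, ih, hp]

theorem sat_nextFree {v : Word α} {i : ℕ} {L : List α} (p₀ : α) (τ : LTL α)
    (hL : ∀ j, ∀ p ∈ v j, p ∈ L) (hns : NonStutterStep v i) :
    (nextFree p₀ L τ).Sat v i ↔ τ.Sat v (i + 1) := by
  have hext : ∀ j, v j = v i ↔ ∀ p ∈ L, (p ∈ v j ↔ p ∈ v i) := fun j =>
    ⟨fun h p _ => h ▸ Iff.rfl, fun h => Set.ext fun p =>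
      ⟨fun hp => (h p (hL j p hp)).1 hp, fun hp => (h p (hL i p hp)).2 hp⟩⟩
  have hletter : ∀ S, (letterOn p₀ S L).Sat v i → ∀ j, ((letterOn p₀ S L).Sat v j ↔ v j = v i) := by
    intro S hi j
    rw [sat_letterOn] at hi ⊢
    rw [hext]
    exact forall₂_congr fun p hp => by rw [hi p hp]
  simp only [nextFree, sat_disj, List.mem_map, exists_exists_and_eq_and]
  constructor
  · rintro ⟨S, -, hS⟩
    exact (sat_atLetterChange p₀ τ (hletter S hS.1) hns).1 hS
  · intro hτ
    classical
    let S := L.filter (· ∈ v i)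
    have hi : (letterOn p₀ S L).Sat v i := by simp +contextual [S]
    exact ⟨S, List.mem_sublists.2 List.filter_sublist,
      (sat_atLetterChange p₀ τ (hletter S hi) hns).2 hτ⟩

theorem sat_elimNext {v : Word α} {L : List α} (p₀ : α) (hL : ∀ j, ∀ p ∈ v j, p ∈ L)
    (hns : ∀ i, NonStutterStep v i) (φ : LTL α) (i : ℕ) :
    (elimNext p₀ L φ).Sat v i ↔ φ.Sat v i := by
  induction φ generalizing i with
  | atom p => rfl
  | not φ ih => simp only [elimNext, Sat, ih]
  | and φ ψ ih₁ ih₂ | until_ φ ψ ih₁ ih₂ => simp only [elimNext, Sat, ih₁, ih₂]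
  | next φ ih => exact (sat_nextFree p₀ _ hL (hns i)).trans (ih (i + 1))

theorem qualitative_letterOn (p₀ : α) (S L : List α) : (letterOn p₀ S L).Qualitative := by
  induction L with
  | nil => simp [letterOn, top, Qualitative]
  | cons p L ih => by_cases hp : p ∈ S <;> simp [letterOn, literal, Qualitative, hp, ih]

theorem qualitative_elimNext (p₀ : α) (L : List α) (φ : LTL α) : (elimNext p₀ L φ).Qualitative := by
  induction φ with
  | atom p => trivial
  | not φ ih => exact ih
  | and φ ψ ih₁ ih₂ | until_ φ ψ ih₁ ih₂ => exact ⟨ih₁, ih₂⟩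
  | next φ ih =>
    refine qualitative_disj p₀ fun χ hχ => ?_
    obtain ⟨S, -, rfl⟩ := List.mem_map.1 hχ
    simp [atLetterChange, or, always, top, Qualitative, qualitative_letterOn, ih]

theorem atoms_letterOn_subset (p₀ : α) (S L : List α) : (letterOn p₀ S L).atoms ⊆ p₀ :: L := by
  induction L with
  | nil => simp [letterOn, top, atoms]
  | cons p L ih =>
    have h := List.Subset.trans ih (List.cons_subset_cons p₀ (List.subset_cons_self p L))
    by_cases hp : p ∈ S <;> simp [letterOn, literal, atoms, hp, h]

theorem atoms_elimNext_subset {p₀ : α} {L : List α} (hp₀ : p₀ ∈ L) {φ : LTL α} (h : φ.atoms ⊆ L) :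
    (elimNext p₀ L φ).atoms ⊆ L := by
  induction φ with
  | atom p => exact h
  | not φ ih => exact ih h
  | next φ ih =>
    refine atoms_disj_subset hp₀ fun χ hχ => ?_
    obtain ⟨S, -, rfl⟩ := List.mem_map.1 hχ
    have hS : (letterOn p₀ S L).atoms ⊆ L :=
      List.Subset.trans (atoms_letterOn_subset p₀ S L) (List.cons_subset.2 ⟨hp₀, List.Subset.refl L⟩)
    simp [atLetterChange, or, always, top, atoms, hp₀, hS, ih h]
  | and φ ψ ih₁ ih₂ | until_ φ ψ ih₁ ih₂ =>
    simp only [atoms, List.append_subset] at h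
    exact List.append_subset.2 ⟨ih₁ h.1, ih₂ h.2⟩

end Letters

end LTL

/-- (Peled–Wilke) Every stutter-closed LTL-expressible set of ω-words is expressible by a
qualitative (X-free) LTL formula. -/
theorem stmt1 {α : Type} (W : Set (Word α)) (hclosed : ClosedUnderStuttering W)
    (φ : LTL α) (hexpr : W = {w : Word α | φ.Sat w 0}) :
    ∃ ψ : LTL α, ψ.Qualitative ∧ {w : Word α | ψ.Sat w 0} = W := by
  classical
  obtain ⟨p₀, hp₀⟩ := φ.exists_mem_atoms
  set L := φ.atoms
  set ψ := LTL.elimNext p₀ L φ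
  have hψ : ψ.Qualitative := LTL.qualitative_elimNext p₀ L φ
  have hψL : ψ.atoms ⊆ L := LTL.atoms_elimNext_subset hp₀ (List.Subset.refl L)
  refine ⟨ψ, hψ, ?_⟩
  subst hexpr
  ext w
  set v : Word α := fun j => w j ∩ {p | p ∈ L}
  obtain ⟨v', hvv', hv'⟩ := exists_stutterRemoval_forall_nonStutterStep v
  have hv'L : ∀ j, ∀ p ∈ v' j, p ∈ L := by
    obtain ⟨f, -, hf, -⟩ := hvv'
    exact fun j p hp => (hf j ▸ hp).2
  calc ψ.Sat w 0 ↔ ψ.Sat v 0 := (LTL.sat_inter_atoms_iff hψL 0).symm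
    _ ↔ ψ.Sat v' 0 := LTL.sat_zero_iff_of_stutterRemoval hvv' hψ
    _ ↔ φ.Sat v' 0 := LTL.sat_elimNext p₀ hv'L hv' φ 0
    _ ↔ φ.Sat v 0 := ⟨fun h => hclosed v' h v (.inr hvv'), fun h => hclosed v h v' (.inl hvv')⟩
    _ ↔ φ.Sat w 0 := LTL.sat_inter_atoms_iff (List.Subset.refl L) 0
end

section
/- For every nonempty finite set P of propositional letters and all positive integers v < k, the set V(P, v/k) of ω-words in which P has variability bounded by v/k is not closed under stuttering: there exist a word w ∈ V(P, v/k) and a word w' stutter-equivalent to w with w' ∉ V(P, v/k). -/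
/-- Projection of a word onto a set `P` of letters. -/
def projW {α : Type} (w : Word α) (P : Set α) : Word α := fun n => w n ∩ P

/-- `P` has variability bounded by `v/k` in `w`: every length-`k` subword of the
projection of `w` onto `P` contains at most `v` non-stuttering steps. -/
def BoundedVariability {α : Type} (P : Set α) (v k : ℕ) (w : Word α) : Prop :=
  ∀ i : ℕ, Set.ncard {j | i ≤ j ∧ j < i + k ∧ NonStutterStep (projW w P) j} ≤ v

/-- `V(P, v/k)`: the set of all ω-words in which `P` has variability bounded by `v/k`. -/
def VarSet {α : Type} (P : Set α) (v k : ℕ) : Set (Word α) :=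
  {w | BoundedVariability P v k w}

/-!
Take a letter `p ∈ P` and the word `u = ∅ {p} ∅ {p} …`, whose projection onto `P` changes at
every position, so every window of length `k` of it has `k > v` non-stuttering steps. Repeating
each letter of `u` exactly `k` times gives a stutter-equivalent word whose projection changes only
at the multiples of `k`, i.e. once per window of length `k`, which is within the bound `v ≥ 1`.
-/

namespace Word

variable {α : Type}

def Flickering (u : Word α) : Prop :=
  ∀ m, u (m + 1) ≠ u m

def stretch (u : Word α) (k : ℕ) : Word α :=
  fun n => u (n / k)

theorem Flickering.of_projW {u : Word α} {P : Set α} (hu : Flickering (projW u P)) :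
    Flickering u :=
  fun m h => hu m (congrArg (· ∩ P) h)

theorem projW_stretch (u : Word α) (P : Set α) (k : ℕ) :
    projW (stretch u k) P = stretch (projW u P) k :=
  rfl

section Stretch

variable {u : Word α} {k : ℕ}

theorem Flickering.stretch_succ_eq_iff (hu : Flickering u) (j : ℕ) :
    stretch u k (j + 1) = stretch u k j ↔ ¬ k ∣ j + 1 := by
  have hdiv : (j + 1) / k = j / k + if k ∣ j + 1 then 1 else 0 := Nat.succ_div
  by_cases hdvd : k ∣ j + 1
  · simpa [stretch, hdiv, hdvd] using hu (j / k)
  · simp [stretch, hdiv, hdvd]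

theorem Flickering.stretch_add_ne (hu : Flickering u) (hk : 0 < k) (j : ℕ) :
    stretch u k (j + k) ≠ stretch u k j := by
  simpa [stretch, Nat.add_div_right j hk] using hu (j / k)

theorem Flickering.nonStutterStep_stretch_iff (hu : Flickering u) (hk : 0 < k) (j : ℕ) :
    NonStutterStep (stretch u k) j ↔ k ∣ j + 1 := by
  rw [NonStutterStep, Ne, hu.stretch_succ_eq_iff, not_not]
  exact or_iff_left fun hconst => hu.stretch_add_ne hk j (hconst k)

/-- Keeping the last position of every block of `stretch u k` recovers `u`. -/
theorem Flickering.stutterRemoval_stretch (hu : Flickering u) (hk : 0 < k) :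
    StutterRemoval (stretch u k) u := by
  have hlast : ∀ n, (k * n + (k - 1)) / k = n := fun n => by
    rw [Nat.mul_add_div hk, Nat.div_eq_of_lt (Nat.sub_lt hk one_pos), add_zero]
  refine ⟨fun n => k * n + (k - 1), ?_, fun n => by simp only [stretch, hlast], ?_⟩
  · refine strictMono_nat_of_lt_succ fun n => ?_
    rw [Nat.mul_succ]
    omega
  · intro i hi
    have hndvd : ¬ k ∣ i + 1 := by
      rintro ⟨c, hc⟩
      have hkc : k ≤ k * c := Nat.le_mul_of_pos_right k (Nat.pos_of_ne_zero (by rintro rfl; simp at hc))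
      exact hi ⟨c - 1, show k * (c - 1) + (k - 1) = i by rw [Nat.mul_sub_one]; omega⟩
    exact ⟨(hu.stretch_succ_eq_iff i).mpr hndvd, i + k, by omega, hu.stretch_add_ne hk i⟩

end Stretch

theorem subsingleton_window_dvd_succ (i k : ℕ) :
    {j | i ≤ j ∧ j < i + k ∧ k ∣ j + 1}.Subsingleton := by
  suffices h : ∀ a b, i ≤ a → b < i + k → k ∣ a + 1 → k ∣ b + 1 → a ≤ b → a = b by
    rintro a ⟨ha, ha', hka⟩ b ⟨hb, hb', hkb⟩
    rcases le_total a b with hab | hab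
    exacts [h a b ha hb' hka hkb hab, (h b a hb ha' hkb hka hab).symm]
  intro a b ha hb hka hkb hab
  have := Nat.eq_zero_of_dvd_of_lt (Nat.dvd_sub hkb hka) (by omega)
  omega

variable {P : Set α} {u : Word α} {v k : ℕ}

theorem boundedVariability_stretch (hu : Flickering (projW u P)) (hv : 0 < v) (hk : 0 < k) :
    BoundedVariability P v k (stretch u k) := by
  intro i
  simp only [projW_stretch, hu.nonStutterStep_stretch_iff hk]
  have hsub := subsingleton_window_dvd_succ i k
  exact ((Set.ncard_le_one hsub.finite).mpr fun a ha b hb => hsub ha hb).trans hv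

theorem not_boundedVariability_of_flickering (hu : Flickering (projW u P)) (hvk : v < k) :
    ¬ BoundedVariability P v k u := by
  intro hbound
  have hwindow : {j | 0 ≤ j ∧ j < 0 + k ∧ NonStutterStep (projW u P) j} = ↑(Finset.range k) := by
    ext j
    simp [NonStutterStep, hu j]
  have := hbound 0
  rw [hwindow, Set.ncard_coe_finset, Finset.card_range] at this
  omega

def alternating (p : α) : Word α :=
  fun m => if Even m then ∅ else {p}

theorem flickering_projW_alternating {p : α} (hp : p ∈ P) :
    Flickering (projW (alternating p) P) := by
  intro m
  by_cases hm : Even m <;>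
    simp [projW, alternating, hm, Nat.even_add_one, Set.singleton_inter_of_mem hp]

end Word

theorem stmt14_general {α : Type} (P : Set α) (hne : P.Nonempty)
    (v k : ℕ) (hv : 0 < v) (hvk : v < k) :
    ∃ w ∈ VarSet P v k, ∃ w' : Word α, StutterEquiv w w' ∧ w' ∉ VarSet P v k := by
  obtain ⟨p, hp⟩ := hne
  have hk : 0 < k := hv.trans hvk
  have hu := Word.flickering_projW_alternating hp
  exact ⟨(Word.alternating p).stretch k, Word.boundedVariability_stretch hu hv hk,
    Word.alternating p, Or.inl (hu.of_projW.stutterRemoval_stretch hk),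
    Word.not_boundedVariability_of_flickering hu hvk⟩

/-- For every nonempty finite set `P` of letters and all positive integers `v < k`,
the set `V(P, v/k)` is not closed under stuttering. -/
theorem stmt14 {α : Type} (P : Set α) (hne : P.Nonempty) (hfin : P.Finite)
    (v k : ℕ) (hv : 0 < v) (hvk : v < k) :
    ∃ w ∈ VarSet P v k, ∃ w' : Word α, StutterEquiv w w' ∧ w' ∉ VarSet P v k :=
  stmt14_general P hne v k hv hvk
end
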